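/- Let 0 < p < 1 be fixed and let G = G(n,p) be an Erdős–Rényi random graph. Then, with probability tending to 1 as n → ∞, for every vertex v, the distribution μ₁ of the simple random walk started at v after one step satisfies ‖μ₁ − π‖_{ℓ²} ≤ C_p/√n, where π is the stationary distribution and C_p depends only on p. -/

import Mathlib

open MeasureTheory Filter Matrix

noncomputable section

/-- The simple graph on `Fin n` determined by a Boolean labelling of unordered pairs of
vertices: `u` and `w` are adjacent iff `u ≠ w` and the pair `{u, w}` is labelled `true`. -/
def graphOf (n : ℕ) (ω : Sym2 (Fin n) → Bool) : SimpleGraph (Fin n) where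
  Adj u w := u ≠ w ∧ ω s(u, w) = true
  symm := by
    refine ⟨fun u w h => ?_⟩
    refine ⟨h.1.symm, ?_⟩
    rw [Sym2.eq_swap]
    exact h.2
  loopless := by
    refine ⟨fun u h => ?_⟩
    exact h.1 rfl

instance (n : ℕ) (ω : Sym2 (Fin n) → Bool) : DecidableRel (graphOf n ω).Adj :=
  fun _ _ => instDecidableAnd

/-- Transition matrix of the simple random walk on a finite graph: from `u`, move to a
uniformly random neighbor of `u`. -/
def transM {V : Type*} [Fintype V] [DecidableEq V] (G : SimpleGraph V) [DecidableRel G.Adj] :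
    Matrix V V ℝ :=
  Matrix.of fun u w => if G.Adj u w then ((G.degree u : ℝ))⁻¹ else 0

/-- Transition matrix with all transitions into `v` removed (the walk killed at `v`). -/
def killedM {V : Type*} [Fintype V] [DecidableEq V] (G : SimpleGraph V) [DecidableRel G.Adj]
    (v : V) : Matrix V V ℝ :=
  Matrix.of fun u w => if w = v then 0 else transM G u w

/-- Expected hitting time `H_{wv}` of `v` for the simple random walk started at `w`,
defined via `H_{wv} = Σ_{t ≥ 0} P(T > t)` where `T` is the first hitting time of `v`;
the survival probability `P(T > t)` equals `((killedM G v)^t 𝟙)_w`.  By convention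
`H_{vv} = 0`. -/
def hit {V : Type*} [Fintype V] [DecidableEq V] (G : SimpleGraph V) [DecidableRel G.Adj]
    (w v : V) : ℝ :=
  if w = v then 0 else ∑' t : ℕ, ((killedM G v ^ t) *ᵥ fun _ => (1 : ℝ)) w

/-- The stationary distribution `π(w) = deg(w) / (2|E|)` of the simple random walk. -/
def statDist {V : Type*} [Fintype V] [DecidableEq V] (G : SimpleGraph V) [DecidableRel G.Adj]
    (w : V) : ℝ :=
  (G.degree w : ℝ) / (2 * (G.edgeFinset.card : ℝ))

/-- The Erdős–Rényi measure `G(n,p)`: each unordered pair of vertices is (independently)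
labelled `true` with probability `p`. -/
def erMeasure (n : ℕ) (p : ℝ) (hp : p ≤ 1) : Measure (Sym2 (Fin n) → Bool) :=
  Measure.pi fun _ =>
    (PMF.bernoulli (Real.toNNReal p) (by simpa using hp)).toMeasure

/-!
Hoeffding's inequality for the `n - 1` independent indicators of the pairs at `v`, and a union
bound over `v`, show that with probability at least `1 - n e^{-(n-1)p²/2}` every degree exceeds
`(n - 1)p/2 ≥ np/4`. On such a graph, as `μ₁` and `π` are nonnegative,
`‖μ₁ - π‖² ≤ ‖μ₁‖² + ‖π‖² = 1/deg v + ∑_w deg(w)²/(2|E|)² ≤ 1/deg v + n/(2|E|) ≤ 8/(np)`.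
-/

open ProbabilityTheory Real SimpleGraph

lemma sum_sub_sq_le_sum_sq_add_sum_sq {ι : Type*} (s : Finset ι) {f g : ι → ℝ} (hf : 0 ≤ f)
    (hg : 0 ≤ g) : ∑ i ∈ s, (f i - g i) ^ 2 ≤ ∑ i ∈ s, f i ^ 2 + ∑ i ∈ s, g i ^ 2 := by
  rw [← Finset.sum_add_distrib]
  exact Finset.sum_le_sum fun i _ => by nlinarith [mul_nonneg (hf i) (hg i)]

section RandomWalk

variable {V : Type*} [Fintype V] [DecidableEq V] (G : SimpleGraph V) [DecidableRel G.Adj]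

lemma sum_transM_sq (v : V) : ∑ w, transM G v w ^ 2 = (G.degree v : ℝ)⁻¹ := by
  have hsq : ∀ w, transM G v w ^ 2 = if G.Adj v w then (G.degree v : ℝ)⁻¹ ^ 2 else 0 := by
    intro w
    simp only [transM, Matrix.of_apply]
    split_ifs <;> simp
  rw [Finset.sum_congr rfl fun w _ => hsq w, ← Finset.sum_filter, Finset.sum_const,
    ← neighborFinset_eq_filter, card_neighborFinset_eq_degree, nsmul_eq_mul]
  rcases eq_or_ne (G.degree v : ℝ) 0 with h | h
  · simp [h]
  · field_simp

lemma sum_statDist_sq_le : ∑ w, statDist G w ^ 2 ≤ Fintype.card V / (2 * G.edgeFinset.card) := by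
  have hdeg : ∑ w, (G.degree w : ℝ) = 2 * G.edgeFinset.card := by
    exact_mod_cast G.sum_degrees_eq_twice_card_edges
  calc ∑ w, statDist G w ^ 2
      ≤ ∑ w, Fintype.card V * (G.degree w : ℝ) / (2 * G.edgeFinset.card) ^ 2 := by
        refine Finset.sum_le_sum fun w _ => ?_
        rw [statDist, div_pow, sq (G.degree w : ℝ)]
        gcongr
        exact_mod_cast (G.degree_lt_card_verts w).le
    _ = Fintype.card V / (2 * G.edgeFinset.card) := by
        rw [← Finset.sum_div, ← Finset.mul_sum, hdeg, sq]
        rcases eq_or_ne (2 * (G.edgeFinset.card : ℝ)) 0 with h | h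
        · simp [h]
        · exact mul_div_mul_right _ _ h

lemma transM_nonneg (v w : V) : 0 ≤ transM G v w := by
  simp only [transM, Matrix.of_apply]
  split_ifs <;> positivity

lemma statDist_nonneg (w : V) : 0 ≤ statDist G w := by
  unfold statDist
  positivity

lemma sum_sq_transM_sub_statDist_le {δ : ℝ} (hδ : 0 < δ) (hdeg : ∀ w, δ ≤ G.degree w) (v : V) :
    ∑ w, (transM G v w - statDist G w) ^ 2 ≤ 2 / δ := by
  have hcard : (0 : ℝ) < Fintype.card V := by exact_mod_cast Fintype.card_pos_iff.2 ⟨v⟩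
  have hedges : Fintype.card V * δ ≤ 2 * G.edgeFinset.card := by
    have := Finset.card_nsmul_le_sum Finset.univ (fun w => (G.degree w : ℝ)) δ fun w _ => hdeg w
    rw [nsmul_eq_mul, Finset.card_univ] at this
    exact_mod_cast this.trans_eq (by exact_mod_cast G.sum_degrees_eq_twice_card_edges)
  calc ∑ w, (transM G v w - statDist G w) ^ 2
      ≤ ∑ w, transM G v w ^ 2 + ∑ w, statDist G w ^ 2 :=
        sum_sub_sq_le_sum_sq_add_sum_sq _ (transM_nonneg G v) (statDist_nonneg G)
    _ ≤ δ⁻¹ + δ⁻¹ := by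
        gcongr
        · rw [sum_transM_sq]
          exact inv_anti₀ hδ (hdeg v)
        · refine (sum_statDist_sq_le G).trans ?_
          rw [div_le_iff₀ (by nlinarith), inv_mul_eq_div, le_div_iff₀ hδ]
          exact hedges
    _ = 2 / δ := by ring

lemma sqrt_sum_sq_transM_sub_statDist_le {p : ℝ} (hp : 0 < p) (hV : 2 ≤ Fintype.card V)
    (hdeg : ∀ w, (Fintype.card V - 1) * p / 2 < G.degree w) (v : V) :
    √(∑ w, (transM G v w - statDist G w) ^ 2) ≤ √(8 / p) / √(Fintype.card V) := by
  have hV' : (2 : ℝ) ≤ Fintype.card V := by exact_mod_cast hV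
  have hδ : 0 < Fintype.card V * p / 4 := by positivity
  have hδdeg : ∀ w, Fintype.card V * p / 4 ≤ G.degree w := fun w =>
    le_of_lt (lt_of_le_of_lt (by nlinarith) (hdeg w))
  rw [← Real.sqrt_div' _ (Nat.cast_nonneg _)]
  refine Real.sqrt_le_sqrt ((sum_sq_transM_sub_statDist_le G hδ hδdeg v).trans_eq ?_)
  field_simp
  ring

end RandomWalk

instance isProbabilityMeasure_erMeasure (n : ℕ) (p : ℝ) (hp : p ≤ 1) :
    IsProbabilityMeasure (erMeasure n p hp) := by
  unfold erMeasure
  infer_instance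

set_option linter.deprecated false in
lemma integral_erMeasure_comp_eval {n : ℕ} {p : ℝ} (hp0 : 0 ≤ p) (hp1 : p ≤ 1)
    (f : Bool → ℝ) (e : Sym2 (Fin n)) :
    ∫ ω, f (ω e) ∂erMeasure n p hp1 = p * f true + (1 - p) * f false := by
  have hmap := (measurePreserving_eval (fun _ : Sym2 (Fin n) =>
    (PMF.bernoulli (Real.toNNReal p) (by simpa using hp1)).toMeasure) e).map_eq
  rw [erMeasure, ← integral_map (measurable_pi_apply e).aemeasurable
    (Measurable.of_discrete (f := f)).aestronglyMeasurable, hmap, PMF.integral_eq_sum,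
    Fintype.sum_bool, PMF.bernoulli_apply, PMF.bernoulli_apply]
  simp [hp0, hp1]

lemma erMeasure_card_filter_le_sub_le_exp {n : ℕ} {p : ℝ} (hp0 : 0 ≤ p) (hp1 : p ≤ 1)
    (s : Finset (Sym2 (Fin n))) {t : ℝ} (ht : 0 ≤ t) :
    erMeasure n p hp1 {ω | ((s.filter (ω · = true)).card : ℝ) ≤ s.card * p - t}
      ≤ ENNReal.ofReal (exp (-2 * t ^ 2 / s.card)) := by
  set μ := erMeasure n p hp1
  let X : Sym2 (Fin n) → (Sym2 (Fin n) → Bool) → ℝ := fun e ω => p - if ω e then 1 else 0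
  have hindep : iIndepFun X μ :=
    iIndepFun_pi (X := fun _ (b : Bool) => p - if b then (1 : ℝ) else 0)
      fun _ => Measurable.of_discrete.aemeasurable
  have hsubG : ∀ e ∈ s, HasSubgaussianMGF (X e) ((‖p - (p - 1)‖₊ / 2) ^ 2) μ := by
    intro e _
    refine hasSubgaussianMGF_of_mem_Icc_of_integral_eq_zero
      (by fun_prop) (ae_of_all _ fun ω => ?_) ?_
    · by_cases h : ω e <;> simp [X, h]
    · rw [integral_erMeasure_comp_eval hp0 hp1 (fun b : Bool => p - if b then 1 else 0)]
      simp only [if_true, Bool.false_eq_true, if_false]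
      ring
  have hsum : ∀ ω, ∑ e ∈ s, X e ω = s.card * p - (s.filter (ω · = true)).card := by
    intro ω
    simp [X, Finset.sum_sub_distrib, Finset.sum_boole, mul_comm]
  have hoeff := HasSubgaussianMGF.measure_sum_ge_le_of_iIndepFun hindep hsubG ht
  rw [← ofReal_measureReal]
  refine ENNReal.ofReal_le_ofReal (le_trans (measureReal_mono ?_) (hoeff.trans_eq ?_))
  · intro ω hω
    simp only [Set.mem_ofPred_eq, hsum] at hω ⊢
    linarith
  · congr 1
    rw [show ‖p - (p - 1)‖₊ = 1 by simp, Finset.sum_const, nsmul_eq_mul]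
    push_cast
    ring

lemma incidenceFinset_graphOf (n : ℕ) (ω : Sym2 (Fin n) → Bool) (v : Fin n) :
    (graphOf n ω).incidenceFinset v =
      ((completeGraph (Fin n)).incidenceFinset v).filter (ω · = true) := by
  ext e
  induction e using Sym2.ind with
  | h a b =>
    simp only [mem_incidenceFinset, Finset.mem_filter, mk'_mem_incidenceSet_iff]
    simp [graphOf]
    tauto

lemma erMeasure_degree_le_half {n : ℕ} {p : ℝ} (hp0 : 0 ≤ p) (hp1 : p ≤ 1) (v : Fin n) :
    erMeasure n p hp1 {ω | ((graphOf n ω).degree v : ℝ) ≤ (n - 1) * p / 2}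
      ≤ ENNReal.ofReal (exp (-((n - 1) * p ^ 2 / 2))) := by
  have hn : (1 : ℝ) ≤ n := by exact_mod_cast v.pos
  have hcard : (((completeGraph (Fin n)).incidenceFinset v).card : ℝ) = n - 1 := by
    rw [card_incidenceFinset_eq_degree, complete_graph_degree,
      Fintype.card_fin, Nat.cast_pred (Fin.pos v)]
  have h := erMeasure_card_filter_le_sub_le_exp hp0 hp1
    ((completeGraph (Fin n)).incidenceFinset v) (t := (n - 1) * p / 2)
    (by have := sub_nonneg.2 hn; positivity)
  rw [hcard] at h
  convert h using 3
  · ext ω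
    rw [← card_incidenceFinset_eq_degree, incidenceFinset_graphOf]
    ring_nf
  · rcases eq_or_ne ((n : ℝ) - 1) 0 with h0 | h0
    · simp [h0]
    · field_simp

lemma tendsto_erMeasure_exists_degree_le_half {p : ℝ} (hp0 : 0 < p) (hp1 : p ≤ 1) :
    Tendsto (fun n => erMeasure n p hp1
      {ω | ∃ v, ((graphOf n ω).degree v : ℝ) ≤ (n - 1) * p / 2}) atTop (nhds 0) := by
  set r := exp (-(p ^ 2 / 2))
  have hr : r < 1 := exp_lt_one_iff.2 (by nlinarith)
  have hbound : ∀ n, erMeasure n p hp1 {ω | ∃ v, ((graphOf n ω).degree v : ℝ) ≤ (n - 1) * p / 2}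
      ≤ ENNReal.ofReal (exp (p ^ 2 / 2) * (n * r ^ n)) := by
    intro n
    calc _ ≤ ∑ v : Fin n,
          erMeasure n p hp1 {ω | ((graphOf n ω).degree v : ℝ) ≤ (n - 1) * p / 2} := by
          rw [Set.ofPred_exists]
          exact measure_iUnion_fintype_le _ _
      _ ≤ ∑ _v : Fin n, ENNReal.ofReal (exp (-((n - 1) * p ^ 2 / 2))) :=
          Finset.sum_le_sum fun v _ => erMeasure_degree_le_half hp0.le hp1 v
      _ = ENNReal.ofReal (exp (p ^ 2 / 2) * (n * r ^ n)) := by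
          rw [Finset.sum_const, Finset.card_univ, Fintype.card_fin, nsmul_eq_mul,
            ← ENNReal.ofReal_natCast, ← ENNReal.ofReal_mul (Nat.cast_nonneg _), ← exp_nat_mul,
            mul_left_comm, ← exp_add]
          ring_nf
  have hlim := ENNReal.tendsto_ofReal
    ((tendsto_self_mul_const_pow_of_lt_one (exp_pos _).le hr).const_mul (exp (p ^ 2 / 2)))
  rw [mul_zero, ENNReal.ofReal_zero] at hlim
  exact tendsto_of_tendsto_of_tendsto_of_le_of_le tendsto_const_nhds hlim (fun _ => zero_le)
    hbound

/-- For fixed `0 < p < 1`, with probability tending to `1` as `n → ∞`, for every vertex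
`v` the distribution `μ₁` of the simple random walk started at `v` after one step
satisfies `‖μ₁ − π‖_{ℓ²} ≤ C_p/√n`. -/
theorem statement16 (p : ℝ) (hp0 : 0 < p) (hp1 : p < 1) :
    ∃ C : ℝ, 0 < C ∧
      Tendsto (fun n : ℕ =>
        erMeasure n p hp1.le
          {ω | ∀ v : Fin n,
            Real.sqrt (∑ w : Fin n,
                (transM (graphOf n ω) v w - statDist (graphOf n ω) w) ^ 2) ≤
              C / Real.sqrt n})
        atTop (nhds 1) := by
  refine ⟨√(8 / p), by positivity, ?_⟩
  have hgood := ENNReal.Tendsto.sub tendsto_const_nhds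
    (tendsto_erMeasure_exists_degree_le_half hp0 hp1.le) (Or.inl ENNReal.one_ne_top)
  rw [tsub_zero] at hgood
  refine tendsto_of_tendsto_of_tendsto_of_le_of_le' hgood tendsto_const_nhds ?_
    (Eventually.of_forall fun _ => prob_le_one)
  filter_upwards [eventually_ge_atTop 2] with n hn
  rw [← prob_compl_eq_one_sub (Set.toFinite _).measurableSet]
  refine measure_mono fun ω hω v => ?_
  simp only [Set.mem_compl_iff, Set.mem_ofPred_eq, not_exists, not_le] at hω
  simpa using sqrt_sum_sq_transM_sub_statDist_le (graphOf n ω) hp0 (by simpa using hn)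
    (by simpa using hω) v
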